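/- Let d ∈ ℕ, let x, ν ∈ ℝ^d, and let a, L_D, L_N, N, F, G_D : ℝ^d → ℝ and a real number G_N(x). Assume: (i) L_D, L_N, N, F and G_D are differentiable at x; (ii) L_N(x) = 0; (iii) L_D(x) ≠ 0; (iv) a(x)·⟨∇L_N(x), ν⟩ ≠ 0; (v) a(x)·⟨∇G_D(x), ν⟩ = 0; and (vi) F(x)·(L_D(x)·a(x)·⟨∇L_N(x), ν⟩) = G_N(x) − L_D(x)·a(x)·⟨∇N(x), ν⟩ − N(x)·a(x)·⟨∇L_D(x), ν⟩. Then the function û defined by û(y) = L_D(y)·N(y) + L_D(y)·L_N(y)·F(y) + G_D(y) satisfies a(x)·⟨∇û(x), ν⟩ = G_N(x). (This verifies that the single-network trial function û = L_D N_θ + L_D L_N F_N + G_D with F_N given by equation (10) satisfies the Neumann portion of a mixed boundary condition exactly at each point of the Neumann boundary where L_D does not vanish.) -/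

import Mathlib

/-! Since `L_N x = 0`, the product rule shows that the term `L_D·L_N·F` contributes only
`L_D x · F x · ∂_ν L_N x` to the normal derivative of `û`, and equation (10) is exactly the
choice of `F x` that makes the flux `a x · ∂_ν û x` equal to `G_N x`. -/

open RealInnerProductSpace

section

variable {𝕜 E : Type*} [NontriviallyNormedField 𝕜] [NormedAddCommGroup E] [NormedSpace 𝕜 E]
  {f g h : E → 𝕜} {x : E}

theorem fderiv_mul_mul_apply_of_eq_zero (hf : DifferentiableAt 𝕜 f x)
    (hg : DifferentiableAt 𝕜 g x) (hh : DifferentiableAt 𝕜 h x) (hg0 : g x = 0) (v : E) :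
    fderiv 𝕜 (fun y => f y * g y * h y) x v = f x * h x * fderiv 𝕜 g x v := by
  rw [fderiv_fun_mul (hf.fun_mul hg) hh, fderiv_fun_mul hf hg]
  simp only [add_apply, smul_apply, smul_eq_mul, hg0]
  ring

end

theorem mixed_bc_single_network_neumann_part_general (d : ℕ)
    (x ν : EuclideanSpace ℝ (Fin d))
    (a LD LN N F GD : EuclideanSpace ℝ (Fin d) → ℝ) (GNx : ℝ)
    (hLD : DifferentiableAt ℝ LD x) (hLN : DifferentiableAt ℝ LN x)
    (hN : DifferentiableAt ℝ N x) (hF : DifferentiableAt ℝ F x)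
    (hGD : DifferentiableAt ℝ GD x)
    (hLN0 : LN x = 0)
    (hGDn : a x * ⟪gradient GD x, ν⟫ = 0)
    (hFval : F x * (LD x * a x * ⟪gradient LN x, ν⟫) =
      GNx - LD x * a x * ⟪gradient N x, ν⟫ - N x * a x * ⟪gradient LD x, ν⟫) :
    a x * ⟪gradient (fun y => LD y * N y + LD y * LN y * F y + GD y) x, ν⟫ = GNx := by
  simp only [inner_gradient_left] at hGDn hFval ⊢
  rw [fderiv_fun_add ((hLD.fun_mul hN).fun_add ((hLD.fun_mul hLN).fun_mul hF)) hGD,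
    fderiv_fun_add (hLD.fun_mul hN) ((hLD.fun_mul hLN).fun_mul hF), fderiv_fun_mul hLD hN]
  simp only [add_apply, smul_apply, smul_eq_mul,
    fderiv_mul_mul_apply_of_eq_zero hLD hLN hF hLN0]
  linear_combination hFval + hGDn

/-- The single-network trial function `û = L_D·N + L_D·L_N·F + G_D` with `F`
given by equation (10) satisfies the Neumann portion of a mixed boundary
condition exactly at each Neumann boundary point where `L_D` does not vanish. -/
theorem mixed_bc_single_network_neumann_part (d : ℕ)
    (x ν : EuclideanSpace ℝ (Fin d))
    (a LD LN N F GD : EuclideanSpace ℝ (Fin d) → ℝ) (GNx : ℝ)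
    (hLD : DifferentiableAt ℝ LD x) (hLN : DifferentiableAt ℝ LN x)
    (hN : DifferentiableAt ℝ N x) (hF : DifferentiableAt ℝ F x)
    (hGD : DifferentiableAt ℝ GD x)
    (hLN0 : LN x = 0) (hLD0 : LD x ≠ 0)
    (hden : a x * ⟪gradient LN x, ν⟫ ≠ 0)
    (hGDn : a x * ⟪gradient GD x, ν⟫ = 0)
    (hFval : F x * (LD x * a x * ⟪gradient LN x, ν⟫) =
      GNx - LD x * a x * ⟪gradient N x, ν⟫ - N x * a x * ⟪gradient LD x, ν⟫) :
    a x * ⟪gradient (fun y => LD y * N y + LD y * LN y * F y + GD y) x, ν⟫ = GNx :=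
  mixed_bc_single_network_neumann_part_general d x ν a LD LN N F GD GNx hLD hLN hN hF hGD hLN0 hGDn
    hFval
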